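/- Let Ω ⊆ ℝ² be an open bounded set and f : Ω → ℝ measurable. Suppose there exist constants C > 0 and an integer m ≥ 0 such that for all λ ≥ 2, |∫_Ω e^{iλ f(x)} dx| ≤ C λ^{-1} (log λ)^m. Then there is a constant C' > 0 such that for all sufficiently small ε ∈ (0,1), the Lebesgue measure of {x ∈ Ω : |f(x)| ≤ ε} is at most C' ε |log ε|^{m+1}. -/

import Mathlib

/-!
Average the oscillatory integral against the Fejér weight `1 - λ/T` over `0 ≤ λ ≤ T`, with
`T = ε⁻¹`. By Fubini this is the integral of the Fejér kernel
`K_T(t) = ∫₀ᵀ (1 - λ/T) cos(λt) dλ = (1 - cos Tt) / (T t²)` composed with `f`. The kernel is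
nonnegative and at least `cos 1 · T/2` where `|t| ≤ 1/T`, so the average dominates
`cos 1 · T/2 · |{|f| ≤ ε}|`. On the other side, splitting at `λ = 2`, the average is at most
`2|Ω| + C ∫₂ᵀ λ⁻¹ (log λ)^m dλ ≤ 2|Ω| + C (log T)^(m+1)`.
-/

open MeasureTheory Real Set

noncomputable def fejerKernel (T t : ℝ) : ℝ :=
  ∫ l in (0:ℝ)..T, (1 - l / T) * cos (l * t)

lemma integral_one_sub_div_self (T : ℝ) : ∫ l in (0:ℝ)..T, (1 - l / T) = T / 2 := by
  rcases eq_or_ne T 0 with rfl | hT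
  · simp
  · simp only [intervalIntegral.integral_sub intervalIntegrable_const
      (intervalIntegral.intervalIntegrable_id.div_const T), intervalIntegral.integral_const,
      intervalIntegral.integral_div, integral_id, smul_eq_mul, sub_zero, mul_one, ne_eq,
      OfNat.ofNat_ne_zero, not_false_eq_true, zero_pow]
    field_simp
    ring

lemma one_sub_div_mem_Icc {T l : ℝ} (hT : 0 < T) (hl : l ∈ Icc 0 T) :
    1 - l / T ∈ Icc 0 1 := by
  have h0 : 0 ≤ l / T := div_nonneg hl.1 hT.le
  have h1 : l / T ≤ 1 := (div_le_one hT).2 hl.2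
  constructor <;> linarith

lemma fejerKernel_eq (T : ℝ) {t : ℝ} (hT : T ≠ 0) (ht : t ≠ 0) :
    fejerKernel T t = (1 - cos (T * t)) / (T * t ^ 2) := by
  have hderiv : ∀ l ∈ uIcc 0 T, HasDerivAt
      (fun l ↦ sin (l * t) / t - l * sin (l * t) / (T * t) - cos (l * t) / (T * t ^ 2))
      ((1 - l / T) * cos (l * t)) l := by
    intro l _
    have hsin := (hasDerivAt_mul_const (x := l) t).sin
    have hcos := (hasDerivAt_mul_const (x := l) t).cos
    refine (((hsin.div_const t).sub ((hasDerivAt_id' l).mul hsin |>.div_const (T * t))).sub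
      (hcos.div_const (T * t ^ 2))).congr_deriv ?_
    field_simp
    ring
  rw [fejerKernel, intervalIntegral.integral_eq_sub_of_hasDerivAt hderiv
    (by apply Continuous.intervalIntegrable; fun_prop)]
  simp only [zero_mul, sin_zero, zero_div, mul_zero, sub_self, cos_zero, zero_sub]
  field_simp
  ring

lemma fejerKernel_nonneg {T : ℝ} (hT : 0 < T) (t : ℝ) : 0 ≤ fejerKernel T t := by
  rcases eq_or_ne t 0 with rfl | ht
  · simp only [fejerKernel, mul_zero, cos_zero, mul_one, integral_one_sub_div_self]
    positivity
  · rw [fejerKernel_eq T hT.ne' ht]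
    exact div_nonneg (by linarith [cos_le_one (T * t)]) (by positivity)

lemma fejerKernel_le {T : ℝ} (hT : 0 < T) (t : ℝ) : fejerKernel T t ≤ T / 2 := by
  rw [fejerKernel, ← integral_one_sub_div_self]
  refine intervalIntegral.integral_mono_on hT.le
    (by apply Continuous.intervalIntegrable; fun_prop)
    (by apply Continuous.intervalIntegrable; fun_prop) fun l hl ↦ ?_
  exact mul_le_of_le_one_right (one_sub_div_mem_Icc hT hl).1 (cos_le_one _)

lemma cos_one_mul_le_fejerKernel {T t : ℝ} (hT : 0 < T) (ht : |t| ≤ T⁻¹) :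
    cos 1 * (T / 2) ≤ fejerKernel T t := by
  rw [fejerKernel, ← integral_one_sub_div_self, ← intervalIntegral.integral_const_mul]
  refine intervalIntegral.integral_mono_on hT.le
    (by apply Continuous.intervalIntegrable; fun_prop)
    (by apply Continuous.intervalIntegrable; fun_prop) fun l hl ↦ ?_
  have hlt : |l * t| ≤ 1 := by
    calc |l * t| = l * |t| := by rw [abs_mul, abs_of_nonneg hl.1]
      _ ≤ T * T⁻¹ := mul_le_mul hl.2 ht (abs_nonneg t) hT.le
      _ = 1 := mul_inv_cancel₀ hT.ne'
  have hcos : cos 1 ≤ cos (l * t) := by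
    rw [← cos_abs (l * t)]
    exact cos_le_cos_of_nonneg_of_le_pi (abs_nonneg _) (by linarith [pi_gt_three]) hlt
  rw [mul_comm]
  exact mul_le_mul_of_nonneg_left hcos (one_sub_div_mem_Icc hT hl).1

lemma continuous_fejerKernel (T : ℝ) : Continuous (fejerKernel T) :=
  intervalIntegral.continuous_parametric_intervalIntegral_of_continuous' (by fun_prop) _ _

lemma integral_abs_le_of_abs_le_inv_mul_log_pow {h : ℝ → ℝ} (hh : Continuous h)
    {V C T : ℝ} {m : ℕ} (hC : 0 ≤ C) (hT : 2 ≤ T) (hV : ∀ l, |h l| ≤ V)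
    (hdecay : ∀ l, 2 ≤ l → |h l| ≤ C * l⁻¹ * log l ^ m) :
    ∫ l in (0:ℝ)..T, |h l| ≤ 2 * V + C * log T ^ (m + 1) := by
  have hint (a b : ℝ) : IntervalIntegrable (fun l ↦ |h l|) volume a b :=
    hh.abs.intervalIntegrable a b
  have hlogT : 0 ≤ log T := log_nonneg (by linarith)
  have hnear : ∫ l in (0:ℝ)..2, |h l| ≤ 2 * V := by
    simpa using intervalIntegral.integral_mono_on zero_le_two (hint 0 2)
      intervalIntegrable_const fun l _ ↦ hV l
  have hfar : ∫ l in (2:ℝ)..T, |h l| ≤ C * log T ^ (m + 1) := calc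
    ∫ l in (2:ℝ)..T, |h l| ≤ ∫ l in (2:ℝ)..T, C * log T ^ m * l⁻¹ := by
      have hinv : IntervalIntegrable (fun l : ℝ ↦ l⁻¹) volume 2 T :=
        intervalIntegrable_inv_iff.2 (.inr (by rw [uIcc_of_le hT]; exact notMem_Icc_of_lt two_pos))
      refine intervalIntegral.integral_mono_on hT (hint 2 T) (hinv.const_mul _) fun l hl ↦ ?_
      have hl0 : 0 < l := by linarith [hl.1]
      have hlog : log l ^ m ≤ log T ^ m :=
        pow_le_pow_left₀ (log_nonneg (by linarith [hl.1])) (log_le_log hl0 hl.2) m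
      calc |h l| ≤ C * l⁻¹ * log l ^ m := hdecay l hl.1
        _ ≤ C * l⁻¹ * log T ^ m := by gcongr
        _ = C * log T ^ m * l⁻¹ := by ring
    _ = C * log T ^ m * log (T / 2) := by
      rw [intervalIntegral.integral_const_mul, integral_inv_of_pos two_pos (by linarith)]
    _ ≤ C * log T ^ (m + 1) := by
      rw [pow_succ, ← mul_assoc]
      exact mul_le_mul_of_nonneg_left (log_le_log (by linarith) (by linarith)) (by positivity)
  rw [← intervalIntegral.integral_add_adjacent_intervals (hint 0 2) (hint 2 T)]
  exact add_le_add hnear hfar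

section FiniteMeasure

variable {α : Type*} [MeasurableSpace α] {μ : Measure α} [IsFiniteMeasure μ] {g : α → ℝ}

lemma integral_fejerKernel_comp (hg : Measurable g) {T : ℝ} (hT : 0 < T) :
    ∫ x, fejerKernel T (g x) ∂μ =
      ∫ l in (0:ℝ)..T, (1 - l / T) * ∫ x, cos (l * g x) ∂μ := by
  have hint : Integrable (Function.uncurry fun x l ↦ (1 - l / T) * cos (l * g x))
      (μ.prod (volume.restrict (Ioc 0 T))) := by
    have hw : IntegrableOn (fun l : ℝ ↦ 1 - l / T) (Ioc 0 T) :=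
      (continuous_const.sub (continuous_id.div_const T)).integrableOn_Ioc
    refine ((integrable_const (1 : ℝ)).mul_prod hw.norm).mono'
      (by fun_prop) (.of_forall fun p ↦ ?_)
    simpa [Function.uncurry, norm_mul] using mul_le_of_le_one_right (norm_nonneg (1 - p.2 / T))
      (abs_cos_le_one (p.2 * g p.1))
  simp_rw [fejerKernel, intervalIntegral.integral_of_le hT.le, ← integral_const_mul]
  exact integral_integral_swap hint

lemma cos_one_mul_measureReal_le_integral_fejerKernel (hg : Measurable g) {T : ℝ}
    (hT : 0 < T) :
    cos 1 * (T / 2) * μ.real {x | |g x| ≤ T⁻¹} ≤ ∫ x, fejerKernel T (g x) ∂μ := by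
  have hint : Integrable (fun x ↦ fejerKernel T (g x)) μ := by
    refine .of_bound ((continuous_fejerKernel T).measurable.comp hg).aestronglyMeasurable
      (T / 2) (.of_forall fun x ↦ ?_)
    rw [norm_of_nonneg (fejerKernel_nonneg hT _)]
    exact fejerKernel_le hT _
  have hs : MeasurableSet {x | |g x| ≤ T⁻¹} := measurableSet_le hg.abs measurable_const
  calc cos 1 * (T / 2) * μ.real {x | |g x| ≤ T⁻¹}
      ≤ ∫ x in {x | |g x| ≤ T⁻¹}, fejerKernel T (g x) ∂μ := by
        rw [mul_comm, ← smul_eq_mul]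
        exact setIntegral_ge_of_const_le hs (measure_ne_top μ _)
          (fun x hx ↦ cos_one_mul_le_fejerKernel hT hx) hint.integrableOn
    _ ≤ ∫ x, fejerKernel T (g x) ∂μ :=
        setIntegral_le_integral hint (.of_forall fun x ↦ fejerKernel_nonneg hT _)

lemma continuous_integral_cos_mul (hg : AEStronglyMeasurable g μ) :
    Continuous fun l : ℝ ↦ ∫ x, cos (l * g x) ∂μ :=
  continuous_of_dominated (bound := fun _ ↦ 1)
    (fun l ↦ continuous_cos.comp_aestronglyMeasurable (hg.const_mul l))
    (fun l ↦ .of_forall fun x ↦ by simpa using abs_cos_le_one (l * g x))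
    (integrable_const 1) (.of_forall fun x ↦ by fun_prop)

lemma abs_integral_cos_mul_le (l : ℝ) : |∫ x, cos (l * g x) ∂μ| ≤ μ.real univ := by
  simpa using norm_integral_le_of_norm_le_const (μ := μ) (f := fun x ↦ cos (l * g x)) (C := 1)
    (.of_forall fun x ↦ by simpa using abs_cos_le_one (l * g x))

lemma abs_integral_cos_mul_le_norm_integral_exp (hg : AEStronglyMeasurable g μ) (l : ℝ) :
    |∫ x, cos (l * g x) ∂μ| ≤ ‖∫ x, Complex.exp (Complex.I * l * g x) ∂μ‖ := by
  have hexp (x : α) : Complex.I * l * g x = ((l * g x : ℝ) : ℂ) * Complex.I := by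
    push_cast; ring
  have hint : Integrable (fun x ↦ Complex.exp (Complex.I * l * g x)) μ := by
    refine .of_bound ?_ 1 (.of_forall fun x ↦ by rw [hexp, Complex.norm_exp_ofReal_mul_I])
    exact Complex.continuous_exp.comp_aestronglyMeasurable
      (aestronglyMeasurable_const.mul (Complex.continuous_ofReal.comp_aestronglyMeasurable hg))
  have hre : ∫ x, cos (l * g x) ∂μ = (∫ x, Complex.exp (Complex.I * l * g x) ∂μ).re := by
    simp_rw [hexp] at hint ⊢
    simp_rw [← Complex.exp_ofReal_mul_I_re]
    exact integral_re hint
  rw [hre]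
  exact Complex.abs_re_le_norm _

theorem cos_one_mul_measureReal_abs_le_inv_le (hg : Measurable g) {C T : ℝ} {m : ℕ}
    (hC : 0 ≤ C) (hT : 2 ≤ T)
    (hosc : ∀ l : ℝ, 2 ≤ l →
      ‖∫ x, Complex.exp (Complex.I * l * g x) ∂μ‖ ≤ C * l⁻¹ * log l ^ m) :
    cos 1 * (T / 2) * μ.real {x | |g x| ≤ T⁻¹} ≤ 2 * μ.real univ + C * log T ^ (m + 1) := by
  have hT0 : 0 < T := by linarith
  have hcont := continuous_integral_cos_mul (μ := μ) hg.aestronglyMeasurable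
  calc cos 1 * (T / 2) * μ.real {x | |g x| ≤ T⁻¹}
      ≤ ∫ l in (0:ℝ)..T, (1 - l / T) * ∫ x, cos (l * g x) ∂μ := by
        rw [← integral_fejerKernel_comp hg hT0]
        exact cos_one_mul_measureReal_le_integral_fejerKernel hg hT0
    _ ≤ ∫ l in (0:ℝ)..T, |∫ x, cos (l * g x) ∂μ| := by
        refine intervalIntegral.integral_mono_on hT0.le
          ((by fun_prop : Continuous _).intervalIntegrable _ _)
          (hcont.abs.intervalIntegrable _ _) fun l hl ↦ ?_
        have hw := one_sub_div_mem_Icc hT0 hl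
        refine (le_abs_self _).trans ?_
        rw [abs_mul, abs_of_nonneg hw.1]
        exact mul_le_of_le_one_left (abs_nonneg _) hw.2
    _ ≤ 2 * μ.real univ + C * log T ^ (m + 1) :=
        integral_abs_le_of_abs_le_inv_mul_log_pow hcont hC hT abs_integral_cos_mul_le
          fun l hl ↦ (abs_integral_cos_mul_le_norm_integral_exp hg.aestronglyMeasurable l).trans
            (hosc l hl)

end FiniteMeasure

theorem stmt_2_general (Ω : Set (ℝ × ℝ)) (hΩb : Bornology.IsBounded Ω)
    (f : ℝ × ℝ → ℝ) (hf : Measurable f)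
    (C : ℝ) (m : ℕ) (hC : 0 < C)
    (hosc : ∀ L : ℝ, 2 ≤ L →
      ‖∫ x in Ω, Complex.exp (Complex.I * L * f x)‖ ≤ C * L⁻¹ * (Real.log L) ^ m) :
    ∃ C' > 0, ∃ ε₀ ∈ Ioo (0:ℝ) 1, ∀ ε ∈ Ioo (0:ℝ) ε₀,
      (volume {x ∈ Ω | |f x| ≤ ε}).toReal ≤ C' * ε * |Real.log ε| ^ (m + 1) := by
  have : IsFiniteMeasure (volume.restrict Ω) := ⟨by simpa using hΩb.measure_lt_top⟩
  have hcos : 0 < cos 1 :=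
    cos_pos_of_mem_Ioo ⟨by linarith [pi_gt_three], by linarith [pi_gt_three]⟩
  set V := volume.real Ω
  refine ⟨2 * (2 * V + C) / cos 1, by positivity, exp (-1),
    ⟨exp_pos _, exp_lt_one_iff.2 (by norm_num)⟩, fun ε ⟨hε0, hε⟩ ↦ ?_⟩
  have hlog : 1 < |log ε| := by
    have := log_lt_log hε0 hε
    rw [log_exp] at this
    rw [abs_of_neg (by linarith)]
    linarith
  have hT : 2 ≤ ε⁻¹ := by
    have : exp (-1) ≤ 2⁻¹ := by
      rw [exp_neg]; exact inv_anti₀ two_pos (by linarith [add_one_le_exp 1])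
    rw [le_inv_comm₀ two_pos hε0]
    linarith
  have key := cos_one_mul_measureReal_abs_le_inv_le (μ := volume.restrict Ω) hf hC.le hT hosc
  rw [inv_inv, measureReal_restrict_apply (measurableSet_le hf.abs measurable_const),
    measureReal_restrict_apply_univ, log_inv,
    ← abs_of_neg (log_neg hε0 (hε.trans (by simp)))] at key
  have hV : 2 * V ≤ 2 * V * |log ε| ^ (m + 1) :=
    le_mul_of_one_le_right (by positivity) (one_le_pow₀ hlog.le)
  rw [← measureReal_def, ofPred_and, ofPred_mem_eq, inter_comm]
  calc volume.real ({x | |f x| ≤ ε} ∩ Ω)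
      = cos 1 * (ε⁻¹ / 2) * volume.real ({x | |f x| ≤ ε} ∩ Ω) * (2 * ε / cos 1) := by
        field_simp
    _ ≤ (2 * V + C * |log ε| ^ (m + 1)) * (2 * ε / cos 1) := by gcongr
    _ ≤ ((2 * V + C) * |log ε| ^ (m + 1)) * (2 * ε / cos 1) := by gcongr; linarith
    _ = 2 * (2 * V + C) / cos 1 * ε * |log ε| ^ (m + 1) := by ring

theorem stmt_2 (Ω : Set (ℝ × ℝ)) (hΩo : IsOpen Ω) (hΩb : Bornology.IsBounded Ω)
    (f : ℝ × ℝ → ℝ) (hf : Measurable f)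
    (C : ℝ) (m : ℕ) (hC : 0 < C)
    (hosc : ∀ L : ℝ, 2 ≤ L →
      ‖∫ x in Ω, Complex.exp (Complex.I * L * f x)‖ ≤ C * L⁻¹ * (Real.log L) ^ m) :
    ∃ C' > 0, ∃ ε₀ ∈ Ioo (0:ℝ) 1, ∀ ε ∈ Ioo (0:ℝ) ε₀,
      (volume {x ∈ Ω | |f x| ≤ ε}).toReal ≤ C' * ε * |Real.log ε| ^ (m + 1) :=
  stmt_2_general Ω hΩb f hf C m hC hosc
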